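/- arXiv:2507.16440 — 2 statements merged into one kernel-verified Lean document; each statement's English description precedes it below -/
import Mathlib

section
/- Let X be an n × M real matrix with XᵀX invertible whose 0-th column is the all-ones vector, let β̂(y) = (XᵀX)⁻¹ Xᵀ y, let K ≥ 2, r : Fin n → Fin K, and d_k i = 1 if r i ≤ k else 0. Fix a coefficient index m ≠ 0 and suppose β̂(d_k)_m ≥ 0 for every k ≤ K−2. Then for every strictly increasing labelling l̃ : Fin K → ℝ, the coefficient β̂(r̃)_m of the transformed outcome r̃ i = l̃ (r i) satisfies β̂(r̃)_m ≤ 0; and if in addition β̂(d_k)_m > 0 for some k, then β̂(r̃)_m < 0 for every strictly increasing l̃. -/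
/-!
Summation by parts writes any labelling as `l ∘ r = l (K-1) • 1 - ∑ₖ (l (k+1) - l k) • dₖ`.
The coefficient `β̂(·)ₘ` is linear and, for `m ≠ 0`, vanishes on the constant regressor, so
`β̂(r̃)ₘ = -∑ₖ (l (k+1) - l k) β̂(dₖ)ₘ`: a combination of the dichotomized coefficients with
strictly negative weights when `l` is strictly increasing.
-/

open Matrix

/-- The OLS coefficient map `β̂(y) = (XᵀX)⁻¹ Xᵀ y`. -/
noncomputable def olsCoef {n M : ℕ} (X : Matrix (Fin n) (Fin M) ℝ) (y : Fin n → ℝ) :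
    Fin M → ℝ :=
  (Xᵀ * X)⁻¹ *ᵥ (Xᵀ *ᵥ y)

open Finset

theorem Fin.sum_ite_le_succ_sub_castSucc {K : ℕ} (l : Fin (K + 1) → ℝ) (x : Fin (K + 1)) :
    ∑ k : Fin K, (if (x : ℕ) ≤ k then l k.succ - l k.castSucc else 0) = l (Fin.last K) - l x := by
  set L : ℕ → ℝ := fun j => l (Fin.ofNat (K + 1) j)
  have hL : ∀ a : Fin (K + 1), L a = l a :=
    fun a => congrArg l (Fin.ext (Nat.mod_eq_of_lt a.isLt))
  have hx : (x : ℕ) ≤ K := Nat.lt_succ_iff.mp x.isLt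
  calc ∑ k : Fin K, (if (x : ℕ) ≤ k then l k.succ - l k.castSucc else 0)
      = ∑ i ∈ range K, if (x : ℕ) ≤ i then L (i + 1) - L i else 0 := by
        rw [← Fin.sum_univ_eq_sum_range (fun i => if (x : ℕ) ≤ i then L (i + 1) - L i else 0)]
        refine sum_congr rfl fun k _ => ?_
        rw [← hL k.succ, ← hL k.castSucc, Fin.val_succ, Fin.val_castSucc]
    _ = ∑ i ∈ Ico (x : ℕ) K, (L (i + 1) - L i) := by
        rw [← sum_filter]
        congr 1
        ext i
        simp only [mem_filter, mem_range, mem_Ico]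
        omega
    _ = l (Fin.last K) - l x := by
        rw [sum_Ico_sub L hx, ← hL, ← hL, Fin.val_last]

def dichotomize {ι : Type*} {K : ℕ} (r : ι → Fin K) (k : ℕ) : ι → ℝ :=
  fun i => if (r i : ℕ) ≤ k then 1 else 0

theorem comp_eq_smul_sub_sum_dichotomize {ι : Type*} {K : ℕ} (r : ι → Fin (K + 1))
    (l : Fin (K + 1) → ℝ) :
    (fun i => l (r i)) =
      l (Fin.last K) • (fun _ => 1) - ∑ k : Fin K, (l k.succ - l k.castSucc) • dichotomize r k := by
  ext i
  simp only [Pi.sub_apply, Pi.smul_apply, Finset.sum_apply, smul_eq_mul, mul_one, dichotomize,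
    mul_ite, mul_zero, Fin.sum_ite_le_succ_sub_castSucc, sub_sub_cancel]

theorem LinearMap.map_comp_eq_neg_sum_dichotomize {ι : Type*} {K : ℕ}
    (φ : (ι → ℝ) →ₗ[ℝ] ℝ) (hφ : φ (fun _ => 1) = 0) (r : ι → Fin (K + 1))
    (l : Fin (K + 1) → ℝ) :
    φ (fun i => l (r i)) = -∑ k : Fin K, (l k.succ - l k.castSucc) * φ (dichotomize r k) := by
  rw [comp_eq_smul_sub_sum_dichotomize, map_sub, map_smul, hφ, map_sum]
  simp only [map_smul, smul_eq_mul, mul_zero, zero_sub]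

section Ols

variable {n M : ℕ} {X : Matrix (Fin n) (Fin M) ℝ}

theorem olsCoef_eq_mulVec (y : Fin n → ℝ) :
    olsCoef X y = ((Xᵀ * X)⁻¹ * Xᵀ) *ᵥ y := by
  rw [olsCoef, mulVec_mulVec]

theorem olsCoef_mulVec (hX : IsUnit (Xᵀ * X)) (v : Fin M → ℝ) : olsCoef X (X *ᵥ v) = v := by
  rw [olsCoef_eq_mulVec, mulVec_mulVec, Matrix.mul_assoc,
    nonsing_inv_mul _ ((isUnit_iff_isUnit_det _).mp hX), one_mulVec]

theorem olsCoef_const_apply_eq_zero [NeZero M] (hX : IsUnit (Xᵀ * X))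
    (hcol : X *ᵥ Pi.single (0 : Fin M) 1 = fun _ => (1 : ℝ)) {m : Fin M} (hm : m ≠ 0) :
    olsCoef X (fun _ => 1) m = 0 := by
  rw [← hcol, olsCoef_mulVec hX, Pi.single_eq_of_ne hm]

theorem olsCoef_comp_eq_neg_sum_dichotomize [NeZero M] {K : ℕ} (hX : IsUnit (Xᵀ * X))
    (hcol : X *ᵥ Pi.single (0 : Fin M) 1 = fun _ => (1 : ℝ)) {m : Fin M} (hm : m ≠ 0)
    (r : Fin n → Fin (K + 1)) (l : Fin (K + 1) → ℝ) :
    olsCoef X (fun i => l (r i)) m =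
      -∑ k : Fin K, (l k.succ - l k.castSucc) * olsCoef X (dichotomize r k) m := by
  have hconst := olsCoef_const_apply_eq_zero hX hcol hm
  simp only [olsCoef_eq_mulVec] at hconst ⊢
  exact (LinearMap.proj m ∘ₗ mulVecLin ((Xᵀ * X)⁻¹ * Xᵀ)).map_comp_eq_neg_sum_dichotomize
    hconst r l

end Ols

/-- non-reversal direction of Proposition 1. If all dichotomized
coefficients `β̂(d_k)_m` are nonnegative, then the coefficient on every strictly
increasingly transformed outcome is nonpositive; if moreover some dichotomized
coefficient is strictly positive, the transformed coefficient is strictly negative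
for every strictly increasing labelling. -/
theorem stmt_3 (n M K : ℕ) [NeZero M] (hK : 2 ≤ K)
    (X : Matrix (Fin n) (Fin M) ℝ) (hX : IsUnit (Xᵀ * X))
    (hcol : X *ᵥ Pi.single (0 : Fin M) 1 = fun _ => (1 : ℝ))
    (r : Fin n → Fin K) (m : Fin M) (hm : m ≠ 0)
    (hpos : ∀ k : Fin (K - 1),
      0 ≤ olsCoef X (fun i => if (r i : ℕ) ≤ (k : ℕ) then (1 : ℝ) else 0) m) :
    (∀ l : Fin K → ℝ, StrictMono l → olsCoef X (fun i => l (r i)) m ≤ 0) ∧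
    ((∃ k : Fin (K - 1),
        0 < olsCoef X (fun i => if (r i : ℕ) ≤ (k : ℕ) then (1 : ℝ) else 0) m) →
      ∀ l : Fin K → ℝ, StrictMono l → olsCoef X (fun i => l (r i)) m < 0) := by
  obtain ⟨K, rfl⟩ : ∃ K', K = K' + 1 := ⟨K - 1, by omega⟩
  have hstep : ∀ l : Fin (K + 1) → ℝ, StrictMono l → ∀ k : Fin K, 0 < l k.succ - l k.castSucc :=
    fun l hl k => sub_pos.mpr (hl k.castSucc_lt_succ)
  refine ⟨fun l hl => ?_, fun ⟨k₀, hk₀⟩ l hl => ?_⟩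
  · rw [olsCoef_comp_eq_neg_sum_dichotomize hX hcol hm, neg_nonpos]
    exact sum_nonneg fun k _ => mul_nonneg (hstep l hl k).le (hpos k)
  · rw [olsCoef_comp_eq_neg_sum_dichotomize hX hcol hm, neg_neg_iff_pos]
    exact sum_pos' (fun k _ => mul_nonneg (hstep l hl k).le (hpos k))
      ⟨k₀, mem_univ _, mul_pos (hstep l hl k₀) hk₀⟩
end

section
/- Let g : Fin n → Fin G assign each observation to a group, and define the within-group demeaning operator D on ℝⁿ by (D y)_i = y_i − (1/|g⁻¹(g(i))|) · ∑_{j : g(j) = g(i)} y_j. Let Ẋ be an n × M real matrix with ẊᵀẊ invertible and define the fixed-effects estimator β̂_FE(y) = (ẊᵀẊ)⁻¹ Ẋᵀ (D y). Let K ≥ 2, r : Fin n → Fin K, l̃ : Fin K → ℝ, r̃ i = l̃ (r i), and d_k i = 1 if r i ≤ k else 0. Then β̂_FE(r̃) = ∑_{k=0}^{K−2} (l̃ k − l̃ (k+1)) · β̂_FE(d_k); in particular no constant term appears because D annihilates constant vectors. -/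
open Matrix

/-- The within-group demeaning operator: subtract from each entry the mean of the
entries belonging to the same group. -/
noncomputable def demean {n G : ℕ} (g : Fin n → Fin G) (y : Fin n → ℝ) : Fin n → ℝ :=
  fun i => y i -
    (∑ j ∈ Finset.univ.filter (fun j => g j = g i), y j) /
      ((Finset.univ.filter (fun j => g j = g i)).card : ℝ)

/-- The fixed-effects (within) estimator `β̂_FE(y) = (ẊᵀẊ)⁻¹ Ẋᵀ (D y)`. -/
noncomputable def feCoef {n G M : ℕ} (g : Fin n → Fin G)
    (Xdot : Matrix (Fin n) (Fin M) ℝ) (y : Fin n → ℝ) : Fin M → ℝ :=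
  (Xdotᵀ * Xdot)⁻¹ *ᵥ (Xdotᵀ *ᵥ demean g y)

/-!
The outcome `l ∘ r` is the top value `l (K-1)` plus the layer-cake sum of the jumps
`l k - l (k+1)` times the indicators `d_k`. The estimator is linear in the outcome,
and it kills the constant `l (K-1)` because every observation lies in its own, hence
nonempty, group.
-/

theorem sum_range_ite_le_sub_succ {M : Type*} [AddCommGroup M] (f : ℕ → M) {j m : ℕ}
    (hjm : j ≤ m) :
    ∑ k ∈ Finset.range m, (if j ≤ k then f k - f (k + 1) else 0) = f j - f m := by
  have hIco : (Finset.range m).filter (j ≤ ·) = Finset.Ico j m := by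
    ext k; simp [and_comm]
  rw [← Finset.sum_filter, hIco, ← neg_sub, ← Finset.sum_Ico_sub f hjm, ← Finset.sum_neg_distrib]
  simp only [neg_sub]

theorem Fin.apply_eq_last_add_sum_ite_sub {M : Type*} [AddCommGroup M] {K : ℕ} (hK : 1 ≤ K)
    (l : Fin K → M) (j : Fin K) :
    l j = l ⟨K - 1, by omega⟩ + ∑ k : Fin (K - 1),
      if (j : ℕ) ≤ k then l (Fin.castLE (by omega) k) - l (Fin.cast (by omega) k.succ) else 0 := by
  let f : ℕ → M := fun m => l ⟨min m (K - 1), by omega⟩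
  have hf : ∀ (m : ℕ) (hm : m < K), l ⟨m, hm⟩ = f m := fun m hm => by
    simp only [f]; congr; omega
  have hterm : ∀ k : Fin (K - 1),
      (if (j : ℕ) ≤ k then l (Fin.castLE (by omega) k) - l (Fin.cast (by omega) k.succ) else 0)
        = if (j : ℕ) ≤ k then f k - f (k + 1) else 0 := fun k => by
    obtain ⟨k, hk⟩ := k
    simp only [Fin.castLE_mk, Fin.succ_mk, Fin.cast_mk, hf]
  rw [Fintype.sum_congr _ _ hterm,
    Fin.sum_univ_eq_sum_range (fun k => if (j : ℕ) ≤ k then f k - f (k + 1) else 0),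
    sum_range_ite_le_sub_succ f (by omega), hf, hf]
  abel

noncomputable def demeanLinearMap {n G : ℕ} (g : Fin n → Fin G) :
    (Fin n → ℝ) →ₗ[ℝ] (Fin n → ℝ) where
  toFun := demean g
  map_add' y z := by
    funext i
    simp only [demean, Pi.add_apply, Finset.sum_add_distrib, add_div]
    ring
  map_smul' c y := by
    funext i
    simp only [demean, Pi.smul_apply, smul_eq_mul, ← Finset.mul_sum, mul_div_assoc,
      RingHom.id_apply]
    ring

noncomputable def feCoefLinearMap {n G M : ℕ} (g : Fin n → Fin G)
    (Xdot : Matrix (Fin n) (Fin M) ℝ) : (Fin n → ℝ) →ₗ[ℝ] (Fin M → ℝ) :=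
  mulVecLin (Xdotᵀ * Xdot)⁻¹ ∘ₗ mulVecLin Xdotᵀ ∘ₗ demeanLinearMap g

theorem feCoefLinearMap_apply {n G M : ℕ} (g : Fin n → Fin G)
    (Xdot : Matrix (Fin n) (Fin M) ℝ) (y : Fin n → ℝ) :
    feCoefLinearMap g Xdot y = feCoef g Xdot y := rfl

theorem demean_const {n G : ℕ} (g : Fin n → Fin G) (c : ℝ) :
    demean g (fun _ => c) = 0 := by
  funext i
  have hcard : ((Finset.univ.filter (fun j => g j = g i)).card : ℝ) ≠ 0 := by
    exact_mod_cast (Finset.card_pos.mpr ⟨i, by simp⟩).ne'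
  simp only [demean, Finset.sum_const, nsmul_eq_mul, Pi.zero_apply]
  field_simp
  ring

theorem feCoef_const {n G M : ℕ} (g : Fin n → Fin G) (Xdot : Matrix (Fin n) (Fin M) ℝ)
    (c : ℝ) : feCoef g Xdot (fun _ => c) = 0 := by
  simp [feCoef, demean_const]

/-- The fixed-effects coefficient vector of the transformed outcome
is a weighted sum of the fixed-effects coefficient vectors of the dichotomizations;
no constant term appears because the demeaning operator annihilates constant
vectors. -/
theorem stmt_6 (n G M K : ℕ) (hK : 2 ≤ K)
    (g : Fin n → Fin G) (Xdot : Matrix (Fin n) (Fin M) ℝ)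
    (r : Fin n → Fin K) (l : Fin K → ℝ) :
    feCoef g Xdot (fun i => l (r i)) =
      (∑ k : Fin (K - 1),
        (l (Fin.castLE (by omega) k) - l (Fin.cast (by omega) k.succ)) •
          feCoef g Xdot (fun i => if (r i : ℕ) ≤ (k : ℕ) then (1 : ℝ) else 0)) ∧
    ∀ c : ℝ, demean g (fun _ => c) = 0 := by
  refine ⟨?_, demean_const g⟩
  have hlayer : (fun i => l (r i)) = (fun _ => l ⟨K - 1, by omega⟩) +
      ∑ k : Fin (K - 1), (l (Fin.castLE (by omega) k) - l (Fin.cast (by omega) k.succ)) •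
        (fun i => if (r i : ℕ) ≤ (k : ℕ) then (1 : ℝ) else 0) := by
    funext i
    simp only [Pi.add_apply, Finset.sum_apply, Pi.smul_apply, smul_eq_mul, mul_ite, mul_one,
      mul_zero]
    exact Fin.apply_eq_last_add_sum_ite_sub (by omega) l (r i)
  simp only [hlayer, ← feCoefLinearMap_apply, map_add, map_sum, map_smul]
  simp only [feCoefLinearMap_apply, feCoef_const, zero_add]
end
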